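/- For every z, w ∈ ℂ with Re w > 0 and every integer M ≥ 0, ∫_1^∞ e^{−wx} x^{z−1} dx = (e^{−w}/w) ∑_{j=0}^{M−1} (1−z)_j/(−w)^j + ((1−z)_M/(−w)^M) ∫_1^∞ e^{−wx} x^{z−M−1} dx, where (v)_j denotes the Pochhammer symbol. -/

import Mathlib

open MeasureTheory Set Filter

open scoped Topology

private lemma aux_norm (z w : ℂ) {x : ℝ} (hx : 0 < x) :
    ‖Complex.exp (-w * x) * (x : ℂ) ^ (z - 1)‖
      = Real.exp (-w.re * x) * x ^ (z.re - 1) := by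
  rw [norm_mul, Complex.norm_exp,
    Complex.norm_cpow_eq_rpow_re_of_pos hx]
  simp [Complex.sub_re]

private lemma aux_real_integrable (s : ℝ) {b : ℝ} (hb : 0 < b) :
    IntegrableOn (fun x : ℝ => Real.exp (-b * x) * x ^ s) (Set.Ioi 1) := by
  apply integrable_of_isBigO_exp_neg (half_pos hb)
  · apply ContinuousOn.mul (Real.continuous_exp.comp (continuous_const.mul continuous_id)).continuousOn
    intro x hx
    exact (Real.continuousAt_rpow_const x s (Or.inl (by linarith [mem_Ici.mp hx]))).continuousWithinAt
  · have ht : Filter.Tendsto (fun x : ℝ => x ^ s * Real.exp (-(b/2) * x)) atTop (nhds 0) :=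
      tendsto_rpow_mul_exp_neg_mul_atTop_nhds_zero s (b/2) (half_pos hb)
    have : (fun x : ℝ => Real.exp (-b * x) * x ^ s) =o[atTop]
        fun x : ℝ => Real.exp (-(b/2) * x) := by
      apply Asymptotics.isLittleO_of_tendsto' (Eventually.of_forall fun x h =>
        absurd h (Real.exp_ne_zero _))
      apply ht.congr'
      filter_upwards with x
      rw [eq_div_iff (Real.exp_ne_zero _), mul_assoc, ← Real.exp_add]
      ring_nf
    exact this.isBigO

private lemma aux_integrable (z w : ℂ) (hw : 0 < w.re) :
    IntegrableOn (fun x : ℝ => Complex.exp (-w * x) * (x : ℂ) ^ (z - 1)) (Set.Ioi 1) := by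
  apply Integrable.mono' ((aux_real_integrable (z.re - 1) hw).congr_fun ?_ measurableSet_Ioi)
  · apply ContinuousOn.aestronglyMeasurable ?_ measurableSet_Ioi
    intro x hx
    have hx0 : (0:ℝ) < x := lt_trans one_pos hx
    exact ((Complex.continuous_exp.comp (continuous_const.mul Complex.continuous_ofReal)).continuousAt.mul
      (Complex.continuousAt_ofReal_cpow_const x _ (Or.inr hx0.ne'))).continuousWithinAt
  · filter_upwards [ae_restrict_mem measurableSet_Ioi] with x hx
    rw [aux_norm z w (lt_trans one_pos hx)]
  · intro x hx
    rfl

private lemma aux_tendsto (z w : ℂ) (hw : 0 < w.re) :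
    Tendsto (fun x : ℝ => Complex.exp (-w * x) * (x : ℂ) ^ (z - 1)) atTop (𝓝 0) := by
  rw [tendsto_zero_iff_norm_tendsto_zero]
  have ht := tendsto_rpow_mul_exp_neg_mul_atTop_nhds_zero (z.re - 1) w.re hw
  apply ht.congr'
  filter_upwards [eventually_gt_atTop (0:ℝ)] with x hx
  rw [aux_norm z w hx, mul_comm]

private lemma aux_step (z w : ℂ) (hw : 0 < w.re) :
    (∫ x in Set.Ioi (1:ℝ), Complex.exp (-w * (x:ℂ)) * (x:ℂ) ^ (z - 1)) =
      Complex.exp (-w) / w + ((1 - z) / (-w)) *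
        ∫ x in Set.Ioi (1:ℝ), Complex.exp (-w * (x:ℂ)) * (x:ℂ) ^ (z - 1 - 1) := by
  have hw0 : w ≠ 0 := fun h => by simp [h] at hw
  set f : ℝ → ℂ := fun x => Complex.exp (-w * x) * (x : ℂ) ^ (z - 1) with hf
  set g : ℝ → ℂ := fun x => Complex.exp (-w * x) * (x : ℂ) ^ (z - 1 - 1) with hg
  set F : ℝ → ℂ := fun x => -(Complex.exp (-w * x) * (x : ℂ) ^ (z - 1) / w) with hF
  have hderiv : ∀ x ∈ Set.Ioi (1:ℝ), HasDerivAt F (f x - ((z-1)/w) * g x) x := by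
    intro x hx
    have hx0 : (0:ℝ) < x := lt_trans one_pos hx
    have hexp : HasDerivAt (fun y : ℝ => Complex.exp (-w * y))
        (Complex.exp (-w * x) * (-w)) x := by
      have := (((hasDerivAt_id ((x:ℝ):ℂ)).const_mul (-w)).cexp).comp_ofReal
      simpa using this
    have hpow : HasDerivAt (fun y : ℝ => (y:ℂ) ^ (z - 1))
        ((z - 1) * (x:ℂ) ^ (z - 1 - 1)) x := by
      have := (((hasDerivAt_id ((x:ℝ):ℂ)).cpow_const (c := z - 1)
        (Or.inl (by simpa using hx0)))).comp_ofReal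
      simpa using this
    have := ((hexp.mul hpow).div_const w).neg
    convert this using 1
    · rfl
    · rfl
    simp only [hf, hg]
    field_simp
    ring_nf
  have hint : IntegrableOn (fun x => f x - ((z-1)/w) * g x) (Set.Ioi 1) :=
    (aux_integrable z w hw).sub ((aux_integrable (z-1) w hw).const_mul _)
  have hcont : ContinuousWithinAt F (Set.Ici 1) 1 := by
    apply ContinuousWithinAt.neg
    apply ContinuousWithinAt.div_const
    exact (((Complex.continuous_exp.comp (continuous_const.mul
      Complex.continuous_ofReal)).continuousAt.mul
      (Complex.continuousAt_ofReal_cpow_const 1 _ (Or.inr one_ne_zero)))).continuousWithinAt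
  have htend : Tendsto F atTop (𝓝 0) := by
    rw [hF]
    simpa [neg_div] using ((aux_tendsto z w hw).neg).div_const w
  have key := integral_Ioi_of_hasDerivAt_of_tendsto hcont hderiv hint htend
  rw [integral_sub (aux_integrable z w hw) ((aux_integrable (z-1) w hw).const_mul _),
    integral_const_mul] at key
  have hF1 : F 1 = -(Complex.exp (-w) / w) := by
    simp [hF]
  rw [hF1] at key
  have : (∫ x in Set.Ioi (1:ℝ), f x) =
      Complex.exp (-w) / w + ((z-1)/w) * ∫ x in Set.Ioi (1:ℝ), g x := by
    have := key
    linear_combination this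
  rw [hf, hg] at this
  rw [this, div_neg]
  ring

private lemma aux_prod (z : ℂ) (j : ℕ) :
    (∏ i ∈ Finset.range (j+1), (1 - z + (i:ℂ)))
      = (1 - z) * ∏ i ∈ Finset.range j, (1 - (z-1) + (i:ℂ)) := by
  rw [Finset.prod_range_succ', mul_comm]
  congr 1
  · norm_num
  · exact Finset.prod_congr rfl fun i _ => by push_cast; ring

theorem G_asymptotic_expansion (z w : ℂ) (hw : 0 < w.re) (M : ℕ) :
    (∫ x in Set.Ioi (1:ℝ), Complex.exp (-w * (x:ℂ)) * (x:ℂ) ^ (z - 1)) =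
      (Complex.exp (-w) / w) *
        (∑ j ∈ Finset.range M, (∏ i ∈ Finset.range j, (1 - z + (i:ℂ))) / (-w) ^ j)
      + ((∏ i ∈ Finset.range M, (1 - z + (i:ℂ))) / (-w) ^ M) *
          ∫ x in Set.Ioi (1:ℝ), Complex.exp (-w * (x:ℂ)) * (x:ℂ) ^ (z - (M:ℂ) - 1) := by
  have hw0 : (-w) ≠ 0 := by
    intro h
    rw [neg_eq_zero] at h
    simp [h] at hw
  induction M generalizing z with
  | zero => simp
  | succ M ih =>
    have hI : z - 1 - (M:ℂ) - 1 = z - ((M+1:ℕ):ℂ) - 1 := by push_cast; ring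
    rw [aux_step z w hw, ih (z-1), hI]
    have hsum : (∑ j ∈ Finset.range (M+1),
          (∏ i ∈ Finset.range j, (1 - z + (i:ℂ))) / (-w) ^ j)
        = 1 + ((1-z)/(-w)) * ∑ j ∈ Finset.range M,
            (∏ i ∈ Finset.range j, (1 - (z-1) + (i:ℂ))) / (-w) ^ j := by
      rw [Finset.sum_range_succ']
      have hterm : ∀ j ∈ Finset.range M,
          (∏ i ∈ Finset.range (j+1), (1 - z + (i:ℂ))) / (-w) ^ (j+1)
            = ((1-z)/(-w)) * ((∏ i ∈ Finset.range j, (1 - (z-1) + (i:ℂ))) / (-w) ^ j) := by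
        intro j _
        rw [aux_prod]
        ring
      rw [Finset.sum_congr rfl hterm, ← Finset.mul_sum]
      simp [add_comm]
    have htail : (∏ i ∈ Finset.range (M+1), (1 - z + (i:ℂ))) / (-w) ^ (M+1)
        = ((1-z)/(-w)) * ((∏ i ∈ Finset.range M, (1 - (z-1) + (i:ℂ))) / (-w) ^ M) := by
      rw [aux_prod]
      ring
    rw [hsum, htail]
    ring
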